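/- Let p be an odd prime with p ∤ Q and p | D where D = P² − 4Q. Then for all n ≥ 1 with p | n, v_p(U_n(P,Q)) = v_p(U_p(P,Q)) + v_p(n) − 1, and v_p(U_n(P,Q)) = 0 if p ∤ n. -/
import Mathlib

def lucasU (P Q : ℤ) : ℕ → ℤ
  | 0 => 0
  | 1 => 1
  | (n + 2) => P * lucasU P Q (n + 1) - Q * lucasU P Q n

lemma lucasU_zero (P Q : ℤ) : lucasU P Q 0 = 0 := rfl
lemma lucasU_one (P Q : ℤ) : lucasU P Q 1 = 1 := rfl
lemma lucasU_rec (P Q : ℤ) (n : ℕ) :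
    lucasU P Q (n + 2) = P * lucasU P Q (n + 1) - Q * lucasU P Q n := rfl

lemma lucasU_add (P Q : ℤ) (b : ℕ) : ∀ a, lucasU P Q (a + b + 1) =
    lucasU P Q (a + 1) * lucasU P Q (b + 1) - Q * lucasU P Q a * lucasU P Q b := by
  intro a
  induction a using Nat.twoStepInduction with
  | zero => simp [lucasU]
  | one =>
      have : 1 + b + 1 = b + 2 := by omega
      rw [this, lucasU_rec]
      simp [lucasU]
  | more a ih1 ih2 =>
      have e : a + 2 + b + 1 = (a + b + 1) + 2 := by omega
      have e2 : a + b + 1 + 1 = (a + 1) + b + 1 := by omega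
      have e3 : a + 2 + 1 = (a + 1) + 2 := by omega
      rw [e, lucasU_rec, e2, ih2, ih1, e3, lucasU_rec P Q (a+1)]
      linear_combination Q * lucasU P Q b * (lucasU_rec P Q a)

lemma natnorm (j : ℕ) : j+1+1 = j+2 := rfl
lemma natnorm2 (j : ℕ) : j+1+2 = j+3 := rfl

lemma lucasU_catalan (P Q : ℤ) : ∀ m, lucasU P Q (m+1)^2 - lucasU P Q (m+2) * lucasU P Q m = Q^m := by
  intro m
  induction m with
  | zero => simp [lucasU]
  | succ m ih =>
      have h1 := lucasU_rec P Q (m+1)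
      have h2 := lucasU_rec P Q m
      simp only [natnorm, natnorm2] at *
      rw [h1]
      linear_combination Q * ih + lucasU P Q (m+2) * h2

lemma lucasU_VD (P Q : ℤ) : ∀ k, (lucasU P Q (k+2) - Q * lucasU P Q k)^2
    - (P^2 - 4*Q) * lucasU P Q (k+1)^2 = 4 * Q^(k+1) := by
  intro k
  induction k with
  | zero => simp [lucasU]
  | succ k ih =>
      have h1 := lucasU_rec P Q (k+1)
      have h2 := lucasU_rec P Q k
      simp only [natnorm, natnorm2] at *
      rw [h1]
      linear_combination Q * ih + Q*(3*lucasU P Q (k+2) - P*lucasU P Q (k+1) - Q*lucasU P Q k) * h2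

lemma lucasU_mul_rec (P Q : ℤ) (k n : ℕ) :
    lucasU P Q ((k+1)*(n+2)) = (lucasU P Q (k+2) - Q * lucasU P Q k) * lucasU P Q ((k+1)*(n+1))
      - Q^(k+1) * lucasU P Q ((k+1)*n) := by
  have h1 := lucasU_add P Q k ((k+1)*n)
  have h2 := lucasU_add P Q (k+1) ((k+1)*n)
  have h3 := lucasU_add P Q k ((k+1)*(n+1))
  have hc := lucasU_catalan P Q k
  have e1 : (k+1)*n + k + 1 = (k+1)*(n+1) := by ring
  have e2 : (k+1)*n + (k+1) + 1 = (k+1)*(n+1) + 1 := by ring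
  have e3 : (k+1)*(n+1) + k + 1 = (k+1)*(n+2) := by ring
  rw [e1] at h1
  rw [e2] at h2
  rw [e3] at h3
  simp only [natnorm] at h2
  rw [h3, h2, h1]
  linear_combination (-(Q) * lucasU P Q ((k+1)*n)) * hc

lemma lucasU_mul (P Q : ℤ) (k : ℕ) :
    ∀ n, lucasU P Q ((k+1)*n) = lucasU P Q (k+1) *
      lucasU (lucasU P Q (k+2) - Q * lucasU P Q k) (Q^(k+1)) n := by
  intro n
  induction n using Nat.twoStepInduction with
  | zero => simp [lucasU]
  | one => simp [lucasU]
  | more n ih1 ih2 =>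
      rw [lucasU_mul_rec, ih1, ih2,
        lucasU_rec (lucasU P Q (k+2) - Q * lucasU P Q k) (Q^(k+1)) n]
      ring

lemma lucasU_mod (P Q M : ℤ) (h : M ∣ P^2 - 4*Q) :
    ∀ n : ℕ, M ∣ 2^n * lucasU P Q (n+1) - ((n:ℤ)+1) * P^n := by
  intro n
  induction n using Nat.twoStepInduction with
  | zero => simp [lucasU]
  | one =>
      have h2 : lucasU P Q 2 = P * 1 - Q * 0 := rfl
      refine ⟨0, ?_⟩
      rw [h2]
      push_cast
      ring
  | more n ih1 ih2 =>
      simp only [natnorm, natnorm2] at *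
      obtain ⟨x, hx⟩ := ih1
      obtain ⟨y, hy⟩ := ih2
      obtain ⟨d, hd⟩ := h
      refine ⟨2*P*y - 4*Q*x + ((n:ℤ)+1)*P^n*d, ?_⟩
      rw [lucasU_rec P Q (n+1)]
      push_cast at hy ⊢
      linear_combination 2*P*hy - 4*Q*hx + ((n:ℤ)+1)*P^n*hd

lemma not_dvd_two (p : ℕ) (hp : p.Prime) (hodd : Odd p) : ¬ (p:ℤ) ∣ 2 := by
  intro h
  have h2 : p ∣ 2 := by exact_mod_cast h
  have := Nat.le_of_dvd (by norm_num) h2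
  have := hp.two_le
  have := Nat.odd_iff.mp hodd
  omega

lemma not_dvd_P (p : ℕ) (hp : p.Prime) (hodd : Odd p) (P Q : ℤ)
    (hQ : ¬(p:ℤ) ∣ Q) (hD : (p:ℤ) ∣ P^2 - 4*Q) : ¬(p:ℤ) ∣ P := by
  intro h
  have h4 : (p:ℤ) ∣ 4*Q := by
    have hp2 : (p:ℤ) ∣ P^2 := dvd_pow h (by norm_num)
    have := dvd_sub hp2 hD
    simpa using this
  rcases (Nat.prime_iff_prime_int.mp hp).dvd_mul.mp h4 with h' | h'
  · have : (p:ℤ) ∣ 2 * 2 := by norm_num at h' ⊢; exact_mod_cast h'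
    rcases (Nat.prime_iff_prime_int.mp hp).dvd_mul.mp this with h'' | h'' <;>
      exact not_dvd_two p hp hodd h''
  · exact hQ h'

lemma lucasU_not_dvd (p : ℕ) (hp : p.Prime) (hodd : Odd p) (P Q : ℤ)
    (hQ : ¬(p:ℤ) ∣ Q) (hD : (p:ℤ) ∣ P^2 - 4*Q) {n : ℕ} (hn : ¬ p ∣ n) :
    ¬ (p:ℤ) ∣ lucasU P Q n := by
  intro hc
  have hn1 : 1 ≤ n := Nat.one_le_iff_ne_zero.mpr (fun h => hn (h ▸ dvd_zero p))
  obtain ⟨m, rfl⟩ : ∃ m, n = m + 1 := ⟨n - 1, by omega⟩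
  have hm := lucasU_mod P Q p hD m
  have hd1 : (p:ℤ) ∣ 2^m * lucasU P Q (m+1) := Dvd.dvd.mul_left hc _
  have hd2 : (p:ℤ) ∣ ((m:ℤ)+1) * P^m := by
    have := dvd_sub hd1 hm
    simpa using this
  rcases (Nat.prime_iff_prime_int.mp hp).dvd_mul.mp hd2 with h' | h'
  · have : (p:ℤ) ∣ ((m+1 : ℕ) : ℤ) := by push_cast; exact h'
    exact hn (by exact_mod_cast this)
  · exact not_dvd_P p hp hodd P Q hQ hD ((Nat.prime_iff_prime_int.mp hp).dvd_of_dvd_pow h')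

lemma padicValInt_eq_one' (p : ℕ) (hp : p.Prime) {z : ℤ} (hz : z ≠ 0)
    (h1 : (p:ℤ) ∣ z) (h2 : ¬ (p:ℤ)^2 ∣ z) : padicValInt p z = 1 := by
  haveI : Fact p.Prime := ⟨hp⟩
  have a1 : 1 ≤ padicValInt p z := by
    rcases (padicValInt_dvd_iff 1 z).mp (by simpa using h1) with h | h
    · exact absurd h hz
    · exact h
  have a2 : padicValInt p z ≤ 1 := by
    by_contra hlt
    exact h2 ((padicValInt_dvd_iff 2 z).mpr (Or.inr (by omega)))
  omega

lemma lucasU_self_dvd (p : ℕ) (hp : p.Prime) (hodd : Odd p) (P Q : ℤ)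
    (hD : (p:ℤ) ∣ P^2 - 4*Q) : (p:ℤ) ∣ lucasU P Q p := by
  obtain ⟨k, hk⟩ : ∃ k, p = k + 1 := ⟨p - 1, by have := hp.two_le; omega⟩
  have hm := lucasU_mod P Q p hD k
  have hkc : ((k:ℤ)+1) = (p:ℤ) := by rw [hk]; push_cast; ring
  rw [hkc] at hm
  have h1 : (p:ℤ) ∣ 2^k * lucasU P Q (k+1) := by
    have h2 : (p:ℤ) ∣ (p:ℤ) * P^k := Dvd.intro _ rfl
    have := dvd_add hm h2
    simpa using this
  have hk' : lucasU P Q p = lucasU P Q (k+1) := by rw [hk]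
  rw [hk']
  rcases (Nat.prime_iff_prime_int.mp hp).dvd_mul.mp h1 with h' | h'
  · exact absurd ((Nat.prime_iff_prime_int.mp hp).dvd_of_dvd_pow h') (not_dvd_two p hp hodd)
  · exact h'

lemma lucasU_self_not_sq_dvd (p : ℕ) (hp : p.Prime) (hodd : Odd p) (P Q : ℤ)
    (hQ : ¬(p:ℤ) ∣ Q) (hD : (p:ℤ)^2 ∣ P^2 - 4*Q) : ¬ (p:ℤ)^2 ∣ lucasU P Q p := by
  intro hc
  obtain ⟨k, hk⟩ : ∃ k, p = k + 1 := ⟨p - 1, by have := hp.two_le; omega⟩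
  have hm := lucasU_mod P Q ((p:ℤ)^2) hD k
  have hkc : ((k:ℤ)+1) = (p:ℤ) := by rw [hk]; push_cast; ring
  rw [hkc] at hm
  have hk' : lucasU P Q p = lucasU P Q (k+1) := by rw [hk]
  rw [hk'] at hc
  have h1 : (p:ℤ)^2 ∣ 2^k * lucasU P Q (k+1) := Dvd.dvd.mul_left hc _
  have h2 : (p:ℤ)^2 ∣ (p:ℤ) * P^k := by
    have := dvd_sub h1 hm
    simpa using this
  have h3 : (p:ℤ) ∣ P^k := by
    obtain ⟨c, hcc⟩ := h2
    refine ⟨c, ?_⟩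
    have hpne : (p:ℤ) ≠ 0 := by exact_mod_cast hp.ne_zero
    apply mul_left_cancel₀ hpne
    rw [← mul_assoc]
    rw [← sq]
    exact hcc
  have hpD1 : (p:ℤ) ∣ P^2 - 4*Q := (dvd_pow_self (p:ℤ) two_ne_zero).trans hD
  exact not_dvd_P p hp hodd P Q hQ hpD1 ((Nat.prime_iff_prime_int.mp hp).dvd_of_dvd_pow h3)

lemma lte_aux (p : ℕ) (hp : p.Prime) (hodd : Odd p) :
    ∀ s : ℕ, ∀ P Q : ℤ, 1 ≤ s → ¬(p:ℤ) ∣ Q → (p:ℤ)^2 ∣ (P^2 - 4*Q) →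
      (∀ k : ℕ, 1 ≤ k → lucasU P Q k ≠ 0) →
      padicValInt p (lucasU P Q s) = padicValNat p s := by
  haveI : Fact p.Prime := ⟨hp⟩
  intro s
  induction s using Nat.strong_induction_on with
  | _ s ih =>
  intro P Q hs hQ hD hnd
  have hpD1 : (p:ℤ) ∣ P^2 - 4*Q := (dvd_pow_self (p:ℤ) two_ne_zero).trans hD
  by_cases hps : p ∣ s
  · obtain ⟨t, rfl⟩ := hps
    have hp1 : 1 ≤ p := hp.two_le.trans' (by norm_num)
    have ht1 : 1 ≤ t := by
      rcases Nat.eq_zero_or_pos t with h | h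
      · subst h; simp at hs
      · exact h
    obtain ⟨k, hk⟩ : ∃ k, p = k + 1 := ⟨p - 1, by omega⟩
    set P' := lucasU P Q (k+2) - Q * lucasU P Q k with hP'
    set Q' := Q^(k+1) with hQ'def
    have hmul : ∀ m : ℕ, lucasU P Q (p * m) = lucasU P Q p * lucasU P' Q' m := by
      intro m
      have e : p * m = (k+1) * m := by rw [hk]
      have e2 : lucasU P Q p = lucasU P Q (k+1) := by rw [hk]
      rw [e, e2]
      exact lucasU_mul P Q k m
    have hD' : (p:ℤ)^2 ∣ P'^2 - 4*Q' := by
      have hVD := lucasU_VD P Q k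
      have e : P'^2 - 4*Q' = (P^2 - 4*Q) * lucasU P Q (k+1)^2 := by
        rw [hP', hQ'def]; linear_combination hVD
      rw [e]
      exact hD.mul_right _
    have hQ' : ¬(p:ℤ) ∣ Q' := fun h => hQ ((Nat.prime_iff_prime_int.mp hp).dvd_of_dvd_pow h)
    have hnd' : ∀ j : ℕ, 1 ≤ j → lucasU P' Q' j ≠ 0 := by
      intro j hj hzero
      apply hnd (p * j) (by nlinarith)
      rw [hmul j, hzero, mul_zero]
    have hUp0 : lucasU P Q p ≠ 0 := hnd p hp1
    have valUp : padicValInt p (lucasU P Q p) = 1 :=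
      padicValInt_eq_one' p hp hUp0 (lucasU_self_dvd p hp hodd P Q hpD1)
        (lucasU_self_not_sq_dvd p hp hodd P Q hQ hD)
    have htlt : t < p * t := by nlinarith [hp.two_le]
    have iht := ih t htlt P' Q' ht1 hQ' hD' hnd'
    rw [hmul t, padicValInt.mul hUp0 (hnd' t ht1), valUp, iht,
      padicValNat.mul (by omega) (by omega), padicValNat.self hp.one_lt]
  · rw [padicValInt.eq_zero_of_not_dvd (lucasU_not_dvd p hp hodd P Q hQ hpD1 hps),
      padicValNat.eq_zero_of_not_dvd hps]

theorem vp_lucasU_of_dvd_disc (p : ℕ) (hp : p.Prime) (hodd : Odd p)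
    (P Q : ℤ) (hP : P ≠ 0) (hQ : Q ≠ 0)
    (hpQ : ¬ (p : ℤ) ∣ Q) (hpD : (p : ℤ) ∣ (P ^ 2 - 4 * Q))
    (hnd : ∀ n : ℕ, 1 ≤ n → lucasU P Q n ≠ 0) :
    ∀ n : ℕ, 1 ≤ n →
      (p ∣ n →
        (padicValInt p (lucasU P Q n) : ℤ) =
          (padicValInt p (lucasU P Q p) : ℤ) + (padicValNat p n : ℤ) - 1) ∧
      (¬ p ∣ n → padicValInt p (lucasU P Q n) = 0) := by
  haveI : Fact p.Prime := ⟨hp⟩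
  intro n hn
  constructor
  · intro hpn
    obtain ⟨t, rfl⟩ := hpn
    have hp1 : 1 ≤ p := hp.two_le.trans' (by norm_num)
    have ht1 : 1 ≤ t := by
      rcases Nat.eq_zero_or_pos t with h | h
      · subst h; simp at hn
      · exact h
    obtain ⟨k, hk⟩ : ∃ k, p = k + 1 := ⟨p - 1, by omega⟩
    set P' := lucasU P Q (k+2) - Q * lucasU P Q k with hP'
    set Q' := Q^(k+1) with hQ'def
    have hmul : ∀ m : ℕ, lucasU P Q (p * m) = lucasU P Q p * lucasU P' Q' m := by
      intro m
      have e : p * m = (k+1) * m := by rw [hk]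
      have e2 : lucasU P Q p = lucasU P Q (k+1) := by rw [hk]
      rw [e, e2]
      exact lucasU_mul P Q k m
    have hUpdvd := lucasU_self_dvd p hp hodd P Q hpD
    have hD' : (p:ℤ)^2 ∣ P'^2 - 4*Q' := by
      have e : P'^2 - 4*Q' = (P^2 - 4*Q) * lucasU P Q (k+1)^2 := by
        rw [hP', hQ'def]; linear_combination lucasU_VD P Q k
      have e2 : lucasU P Q (k+1) = lucasU P Q p := by rw [hk]
      rw [e, e2, sq ((p:ℤ))]
      exact mul_dvd_mul hpD (dvd_pow hUpdvd two_ne_zero)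
    have hQ'' : ¬(p:ℤ) ∣ Q' := fun h => hpQ ((Nat.prime_iff_prime_int.mp hp).dvd_of_dvd_pow h)
    have hnd' : ∀ j : ℕ, 1 ≤ j → lucasU P' Q' j ≠ 0 := by
      intro j hj hzero
      apply hnd (p * j) (by nlinarith)
      rw [hmul j, hzero, mul_zero]
    have hUp0 : lucasU P Q p ≠ 0 := hnd p hp1
    have iht := lte_aux p hp hodd t P' Q' ht1 hQ'' hD' hnd'
    rw [hmul t, padicValInt.mul hUp0 (hnd' t ht1), iht,
      padicValNat.mul (by omega) (by omega), padicValNat.self hp.one_lt]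
    push_cast
    ring
  · intro hpn
    exact padicValInt.eq_zero_of_not_dvd (lucasU_not_dvd p hp hodd P Q hpQ hpD hpn)
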